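/- arXiv:0804.4517 — 4 statements merged into one kernel-verified Lean document; each statement's English description precedes it below -/
import Mathlib

section
/- Let A and B be n×n real positive definite matrices. Then the 2n×2n block matrix [[A∘B, Diag(A)], [Diag(A), A∘B⁻¹]] is positive semidefinite, where ∘ denotes the Hadamard (entrywise) product and Diag(A) = A∘I is the diagonal matrix whose diagonal entries are those of A. -/
/-!
The block matrix is the Hadamard product of `[[A, A], [A, A]] = [I; I] A [I, I]`, which is
positive semidefinite, and `[[B, I], [I, B⁻¹]]`, which is positive semidefinite because its
Schur complement `B⁻¹ - I B⁻¹ I` vanishes. The Schur product theorem concludes.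
-/

open Matrix

namespace Matrix

theorem fromBlocks_hadamard_fromBlocks {m n R : Type*} [Mul R]
    (A : Matrix m m R) (B : Matrix m n R) (C : Matrix n m R) (D : Matrix n n R)
    (A' : Matrix m m R) (B' : Matrix m n R) (C' : Matrix n m R) (D' : Matrix n n R) :
    fromBlocks A B C D ⊙ fromBlocks A' B' C' D' =
      fromBlocks (A ⊙ A') (B ⊙ B') (C ⊙ C') (D ⊙ D') := by
  ext (i | i) (j | j) <;> rfl

variable {m R : Type*} [Fintype m] [DecidableEq m]

theorem PosSemidef.fromBlocks_self [CommRing R] [PartialOrder R] [StarRing R]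
    [StarOrderedRing R] {A : Matrix m m R} (hA : A.PosSemidef) :
    (fromBlocks A A A A).PosSemidef := by
  have h := hA.mul_mul_conjTranspose_same (fromRows (1 : Matrix m m R) (1 : Matrix m m R))
  rwa [fromRows_mul, one_mul, conjTranspose_fromRows_eq_fromCols_conjTranspose,
    conjTranspose_one, fromRows_mul_fromCols, mul_one] at h

theorem PosDef.fromBlocks_one_inv [Field R] [PartialOrder R] [StarRing R] [StarOrderedRing R]
    {B : Matrix m m R} (hB : B.PosDef) :
    (fromBlocks B 1 1 B⁻¹).PosSemidef := by
  have := hB.isUnit.invertible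
  simpa using (hB.fromBlocks₁₁ (1 : Matrix m m R) B⁻¹).mpr (by simpa using PosSemidef.zero)

end Matrix

/-- For `n × n` real positive definite matrices `A` and `B`, the block matrix
`[[A∘B, Diag(A)], [Diag(A), A∘B⁻¹]]` is positive semidefinite, where `∘` is the
Hadamard product and `Diag(A) = A∘I`. -/
theorem fromBlocks_hadamard_diag_posSemidef {n : ℕ} (A B : Matrix (Fin n) (Fin n) ℝ)
    (hA : A.PosDef) (hB : B.PosDef) :
    (Matrix.fromBlocks (A.hadamard B) (A.hadamard 1)
      (A.hadamard 1) (A.hadamard B⁻¹)).PosSemidef := by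
  rw [← fromBlocks_hadamard_fromBlocks]
  exact hA.posSemidef.fromBlocks_self.hadamard hB.fromBlocks_one_inv
end

section
/- Let A be an n×n real positive definite matrix, and let diag(A) denote the column vector in ℝⁿ whose i-th entry is Aᵢᵢ. Then diag(A)ᵀ (A∘A)⁻¹ diag(A) ≤ n, where ∘ denotes the Hadamard (entrywise) product and (A∘A)⁻¹ is the inverse of A∘A (which is positive definite by the Schur product theorem). -/
/-!
Put `w = (A∘A)⁻¹ diag(A)`, `D = diagonal w` and `t = diag(A)ᵀ w`. Then `t = tr(AD)`, and
`t = wᵀ (A∘A) w = tr(ADAD)` because `A` is symmetric. Writing `A = BᵀB`, both traces are those of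
the symmetric matrix `S = B D Bᵀ` and of `S²`, so Cauchy–Schwarz on the diagonal of `S` gives
`t² = (tr S)² ≤ n ∑ᵢ Sᵢᵢ² ≤ n tr(S²) = n t`, whence `0 ≤ t ≤ n`.
-/

open Matrix

namespace Matrix

variable {ι R : Type*} [Fintype ι]

theorem IsSymm.sq_trace_le_card_mul_trace_mul_self [CommRing R] [LinearOrder R]
    [IsStrictOrderedRing R] {S : Matrix ι ι R} (hS : S.IsSymm) :
    S.trace ^ 2 ≤ Fintype.card ι * (S * S).trace :=
  calc S.trace ^ 2 = (∑ i, S i i) ^ 2 := rfl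
    _ ≤ Fintype.card ι * ∑ i, S i i ^ 2 := sq_sum_le_card_mul_sum_sq
    _ ≤ Fintype.card ι * ∑ i, ∑ j, S i j ^ 2 := by
        gcongr with i
        exact Finset.single_le_sum (f := fun j ↦ S i j ^ 2) (fun j _ ↦ sq_nonneg _)
          (Finset.mem_univ i)
    _ = Fintype.card ι * (S * Sᵀ).trace := by
        simp only [← sum_hadamard_eq, hadamard_apply, sq]
    _ = Fintype.card ι * (S * S).trace := by rw [hS.eq]

variable [DecidableEq ι]

theorem diag_dotProduct_eq_trace_mul_diagonal [Semiring R] (A : Matrix ι ι R) (w : ι → R) :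
    A.diag ⬝ᵥ w = (A * diagonal w).trace := by
  simp [trace, dotProduct]

theorem IsSymm.dotProduct_hadamard_self_mulVec [CommSemiring R] {A : Matrix ι ι R}
    (hA : A.IsSymm) (w : ι → R) :
    w ⬝ᵥ (A ⊙ A) *ᵥ w = (A * diagonal w * A * diagonal w).trace := by
  rw [dotProduct_mulVec, dotProduct_vecMul_hadamard, transpose_mul, hA.eq, diagonal_transpose]
  simp only [Matrix.mul_assoc]
  rw [trace_mul_comm]
  simp only [Matrix.mul_assoc]

theorem PosSemidef.sq_trace_mul_le_card_mul_trace_mul_mul {A D : Matrix ι ι ℝ}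
    (hA : A.PosSemidef) (hD : D.IsSymm) :
    (A * D).trace ^ 2 ≤ Fintype.card ι * (A * D * A * D).trace := by
  open scoped MatrixOrder in
  obtain ⟨B, rfl⟩ := CStarAlgebra.nonneg_iff_eq_star_mul_self.mp hA.nonneg
  rw [star_eq_conjTranspose, conjTranspose_eq_transpose_of_trivial]
  have hS : (B * D * Bᵀ).IsSymm := by
    simp [IsSymm, transpose_mul, hD.eq, Matrix.mul_assoc]
  have h_trace : (Bᵀ * B * D).trace = (B * D * Bᵀ).trace := by
    rw [Matrix.mul_assoc, trace_mul_comm, Matrix.mul_assoc]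
  have h_trace_sq : (Bᵀ * B * D * (Bᵀ * B) * D).trace = (B * D * Bᵀ * (B * D * Bᵀ)).trace := by
    simp only [Matrix.mul_assoc]
    rw [trace_mul_comm]
    simp only [Matrix.mul_assoc]
  rw [h_trace, h_trace_sq]
  exact hS.sq_trace_le_card_mul_trace_mul_self

end Matrix

/-- For an `n × n` real positive definite matrix `A`,
`diag(A)ᵀ (A∘A)⁻¹ diag(A) ≤ n`, where `diag(A)` is the vector of diagonal entries of `A`
and `∘` is the Hadamard product. -/
theorem diag_dotProduct_hadamard_inv_le {n : ℕ} (A : Matrix (Fin n) (Fin n) ℝ)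
    (hA : A.PosDef) :
    A.diag ⬝ᵥ ((A.hadamard A)⁻¹ *ᵥ A.diag) ≤ (n : ℝ) := by
  have hA_symm : A.IsSymm := isHermitian_iff_isSymm.mp hA.isHermitian
  have hAA : IsUnit (A ⊙ A).det := (isUnit_iff_isUnit_det _).mp (hA.hadamard hA).isUnit
  set w := (A ⊙ A)⁻¹ *ᵥ A.diag
  have hw : (A ⊙ A) *ᵥ w = A.diag := by rw [mulVec_mulVec, mul_nonsing_inv _ hAA, one_mulVec]
  set t := A.diag ⬝ᵥ w
  have ht_trace : (A * diagonal w).trace = t := (diag_dotProduct_eq_trace_mul_diagonal A w).symm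
  have ht_trace_sq : (A * diagonal w * A * diagonal w).trace = t := by
    rw [← hA_symm.dotProduct_hadamard_self_mulVec, hw, dotProduct_comm]
  have key := hA.posSemidef.sq_trace_mul_le_card_mul_trace_mul_mul (isSymm_diagonal w)
  rw [ht_trace, ht_trace_sq, Fintype.card_fin] at key
  nlinarith
end

section
/- Let A be an n×n real positive definite matrix. Then the (n+1)×(n+1) block matrix [[A∘A, diag(A)], [diag(A)ᵀ, n]] is positive semidefinite, where A∘A is the Hadamard square of A, diag(A) is the column vector in ℝⁿ whose i-th entry is Aᵢᵢ, and the bottom-right block is the 1×1 matrix with entry n. -/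
/-!
Factor `A = Bᵀ B` and attach to each pair `(k, l)` of rows of `B` the vector
`w_{kl} = (B k i * B l i)_i ⊕ δ_{kl}`. The block matrix is the Gram matrix of these vectors:
`∑_{k,l} B k i B l i B k j B l j = (A i j)²`, `∑_{k,l} B k i B l i δ_{kl} = A i i`, and
`∑_{k,l} δ_{kl}` is the number of rows of `B`.
-/

open Matrix

section
variable {m ι : Type*} [Fintype m] [DecidableEq m]

def hadamardGramFactor (B : Matrix m ι ℝ) : Matrix (m × m) (ι ⊕ Unit) ℝ :=
  fromCols (of fun p i => B p.1 i * B p.2 i) (of fun p _ => if p.1 = p.2 then 1 else 0)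

theorem hadamardGramFactor_transpose_mul_self (B : Matrix m ι ℝ) :
    (hadamardGramFactor B)ᵀ * hadamardGramFactor B =
      fromBlocks ((Bᵀ * B) ⊙ (Bᵀ * B)) (of fun i _ => (Bᵀ * B).diag i)
        (of fun _ j => (Bᵀ * B).diag j) (of fun _ _ => (Fintype.card m : ℝ)) := by
  rw [hadamardGramFactor, transpose_fromCols, fromRows_mul_fromCols]
  congr 1 <;> ext i j
  · simp only [mul_apply, hadamard_apply, transpose_apply, of_apply, Fintype.sum_prod_type,
      Finset.sum_mul_sum]
    exact Finset.sum_congr rfl fun k _ => Finset.sum_congr rfl fun l _ => by ring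
  all_goals simp [mul_apply, Fintype.sum_prod_type]

end

theorem Matrix.PosSemidef.fromBlocks_hadamard_self_diag {ι : Type*} [Fintype ι]
    {A : Matrix ι ι ℝ} (hA : A.PosSemidef) :
    (fromBlocks (A ⊙ A) (of fun i (_ : Unit) => A.diag i) (of fun (_ : Unit) j => A.diag j)
      (of fun (_ : Unit) (_ : Unit) => (Fintype.card ι : ℝ))).PosSemidef := by
  classical
  open scoped MatrixOrder in
  obtain ⟨B, rfl⟩ := CStarAlgebra.nonneg_iff_eq_star_mul_self.mp hA.nonneg
  rw [star_eq_conjTranspose, conjTranspose_eq_transpose_of_trivial,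
    ← hadamardGramFactor_transpose_mul_self]
  simpa only [conjTranspose_eq_transpose_of_trivial] using
    posSemidef_conjTranspose_mul_self (hadamardGramFactor B)

/-- For an `n × n` real positive definite matrix `A`, the `(n+1) × (n+1)` block matrix
`[[A∘A, diag(A)], [diag(A)ᵀ, n]]` is positive semidefinite, where `A∘A` is the Hadamard
square and `diag(A)` is the column vector of diagonal entries of `A`. -/
theorem fromBlocks_hadamard_sq_diag_n_posSemidef {n : ℕ} (A : Matrix (Fin n) (Fin n) ℝ)
    (hA : A.PosDef) :
    (Matrix.fromBlocks (A.hadamard A)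
      (Matrix.of fun i (_ : Unit) => A.diag i)
      (Matrix.of fun (_ : Unit) j => A.diag j)
      (Matrix.of fun (_ : Unit) (_ : Unit) => (n : ℝ))).PosSemidef := by
  simpa only [Fintype.card_fin] using hA.posSemidef.fromBlocks_hadamard_self_diag
end

section
/- Let A be an n×n real positive semidefinite matrix with n ≥ 1. Then A∘A − (1/n)·diag(A)diag(A)ᵀ is positive semidefinite, i.e., A∘A ≥ diag(A)diag(A)ᵀ/n in the Loewner order, where A∘A is the Hadamard square of A and diag(A)diag(A)ᵀ is the rank-one matrix with (i,j) entry AᵢᵢAⱼⱼ. -/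
/-!
Factor `A = BᵀB` and fix `x`. With `M = B diag(x) Bᵀ`, the quadratic form of `A ∘ A` at `x` is
`∑ᵢⱼ xᵢ xⱼ Aᵢⱼ² = tr (M Mᵀ) = ∑ₖₗ Mₖₗ²`, while that of `diag(A)diag(A)ᵀ` is
`(∑ᵢ Aᵢᵢ xᵢ)² = (tr M)²`. Cauchy–Schwarz on the diagonal of `M` gives
`(tr M)² ≤ n ∑ₖ Mₖₖ² ≤ n ∑ₖₗ Mₖₗ²`.
-/

namespace Matrix

variable {m ι : Type*} [Fintype m] [Fintype ι]

theorem inv_card_mul_trace_sq_le_trace_mul_transpose {R : Type*} [Field R] [LinearOrder R]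
    [IsStrictOrderedRing R] (M : Matrix m m R) :
    (Fintype.card m : R)⁻¹ * trace M ^ 2 ≤ trace (M * Mᵀ) := by
  have h_frob : trace (M * Mᵀ) = ∑ i, ∑ j, M i j ^ 2 := by
    simp only [trace, diag_apply, mul_apply, transpose_apply, sq]
  have h_diag : ∑ i, M i i ^ 2 ≤ trace (M * Mᵀ) := by
    rw [h_frob]
    gcongr with i
    exact Finset.single_le_sum (fun j _ => sq_nonneg (M i j)) (Finset.mem_univ i)
  rcases (Fintype.card m).eq_zero_or_pos with hm | hm
  · rw [hm, Nat.cast_zero, _root_.inv_zero, zero_mul]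
    exact (Finset.sum_nonneg fun i _ => sq_nonneg (M i i)).trans h_diag
  · rw [inv_mul_le_iff₀ (by exact_mod_cast hm)]
    calc trace M ^ 2 ≤ Fintype.card m * ∑ i, M i i ^ 2 := sq_sum_le_card_mul_sum_sq
      _ ≤ Fintype.card m * trace (M * Mᵀ) := by gcongr

variable {R : Type*} [CommRing R] [DecidableEq ι]

theorem dotProduct_hadamard_transpose_mul_self_mulVec (B : Matrix m ι R) (x : ι → R) :
    x ⬝ᵥ ((Bᵀ * B) ⊙ (Bᵀ * B)) *ᵥ x =
      trace (B * diagonal x * Bᵀ * (B * diagonal x * Bᵀ)ᵀ) := by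
  rw [dotProduct_mulVec, dotProduct_vecMul_hadamard]
  simp only [transpose_mul, transpose_transpose, diagonal_transpose, Matrix.mul_assoc]
  rw [trace_mul_comm B]
  simp only [Matrix.mul_assoc]

theorem diag_transpose_mul_self_dotProduct (B : Matrix m ι R) (x : ι → R) :
    (Bᵀ * B).diag ⬝ᵥ x = trace (B * diagonal x * Bᵀ) := by
  rw [trace_mul_cycle]
  simp [trace, dotProduct, mul_diagonal]

omit [DecidableEq ι] in
theorem dotProduct_vecMulVec_mulVec (u v x : ι → R) :
    x ⬝ᵥ vecMulVec u v *ᵥ x = (x ⬝ᵥ u) * (v ⬝ᵥ x) := by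
  rw [vecMulVec_mulVec]
  simp [dotProduct_smul, mul_comm]

open scoped MatrixOrder in
theorem PosSemidef.exists_eq_transpose_mul_self {A : Matrix ι ι ℝ} (hA : A.PosSemidef) :
    ∃ B : Matrix ι ι ℝ, A = Bᵀ * B := by
  obtain ⟨B, hB⟩ := CStarAlgebra.nonneg_iff_eq_star_mul_self.mp hA.nonneg
  exact ⟨B, by simpa [star_eq_conjTranspose] using hB⟩

theorem PosSemidef.hadamard_self_sub_inv_card_smul_vecMulVec_diag {A : Matrix ι ι ℝ}
    (hA : A.PosSemidef) :
    (A ⊙ A - (Fintype.card ι : ℝ)⁻¹ • vecMulVec A.diag A.diag).PosSemidef := by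
  have h_herm : (A ⊙ A - (Fintype.card ι : ℝ)⁻¹ • vecMulVec A.diag A.diag).IsHermitian := by
    refine (hA.isHermitian.hadamard hA.isHermitian).sub (IsHermitian.smul ?_ (.all _))
    simpa using (posSemidef_vecMulVec_self_star A.diag).isHermitian
  refine .of_dotProduct_mulVec_nonneg h_herm fun x => ?_
  classical
  obtain ⟨B, rfl⟩ := hA.exists_eq_transpose_mul_self
  have h_le := inv_card_mul_trace_sq_le_trace_mul_transpose (B * diagonal x * Bᵀ)
  rw [star_trivial, sub_mulVec, dotProduct_sub, smul_mulVec, dotProduct_smul,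
    dotProduct_hadamard_transpose_mul_self_mulVec, dotProduct_vecMulVec_mulVec,
    dotProduct_comm, diag_transpose_mul_self_dotProduct, smul_eq_mul, ← sq]
  linarith

end Matrix

theorem hadamard_sq_ge_diag_vecMulVec_general {n : ℕ} (A : Matrix (Fin n) (Fin n) ℝ)
    (hA : A.PosSemidef) :
    (A.hadamard A - (n : ℝ)⁻¹ • Matrix.vecMulVec A.diag A.diag).PosSemidef := by
  simpa only [Fintype.card_fin] using hA.hadamard_self_sub_inv_card_smul_vecMulVec_diag

/-- For an `n × n` real positive semidefinite matrix `A` with `n ≥ 1`,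
`A∘A ≥ diag(A)diag(A)ᵀ / n` in the Loewner order, where `A∘A` is the Hadamard square and
`diag(A)diag(A)ᵀ` is the rank-one matrix with `(i,j)` entry `Aᵢᵢ Aⱼⱼ`. -/
theorem hadamard_sq_ge_diag_vecMulVec {n : ℕ} (hn : 1 ≤ n) (A : Matrix (Fin n) (Fin n) ℝ)
    (hA : A.PosSemidef) :
    (A.hadamard A - (n : ℝ)⁻¹ • Matrix.vecMulVec A.diag A.diag).PosSemidef :=
  hadamard_sq_ge_diag_vecMulVec_general A hA
end
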